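/- arXiv:1412.7875 — 4 statements merged into one kernel-verified Lean document; each statement's English description precedes it below -/
import Mathlib

section
/- The real number 3·Γ(1/3)^6 / (2^(8/3)·π^3) is strictly greater than 5.632. -/
open Finset

/-- `F a k n = ∏_{i<n} (a+i+1)`, valid when `n ≤ 2^k` (binary splitting). -/
def F : ℕ → ℕ → ℕ → ℕ
  | _, _, 0 => 1
  | a, 0, _+1 => a + 1
  | a, k+1, n+1 => F a k ((n+1)/2) * F (a + (n+1)/2) k (n+1 - (n+1)/2)

/-- `Q a k n = ∏_{i<n} (3(a+i)+1)`, valid when `n ≤ 2^k` (binary splitting). -/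
def Q : ℕ → ℕ → ℕ → ℕ
  | _, _, 0 => 1
  | a, 0, _+1 => 3*a + 1
  | a, k+1, n+1 => Q a k ((n+1)/2) * Q (a + (n+1)/2) k (n+1 - (n+1)/2)

lemma F_spec : ∀ k a n, n ≤ 2^k → F a k n = ∏ i ∈ range n, (a + i + 1) := by
  intro k
  induction k with
  | zero =>
    intro a n hn
    interval_cases n <;> simp [F]
  | succ k ih =>
    intro a n hn
    match n with
    | 0 => simp [F]
    | n+1 =>
      have h2 : (2:ℕ)^(k+1) = 2^k * 2 := by rw [pow_succ]
      have hm : (n+1)/2 ≤ 2^k := by omega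
      have hr : (n+1) - (n+1)/2 ≤ 2^k := by omega
      have hsum : (n+1)/2 + ((n+1) - (n+1)/2) = n+1 := by omega
      show F a k ((n+1)/2) * F (a + (n+1)/2) k (n+1 - (n+1)/2) = _
      rw [ih a _ hm, ih (a + (n+1)/2) _ hr]
      conv_rhs => rw [← hsum]
      rw [Finset.prod_range_add]
      congr 1
      apply Finset.prod_congr rfl
      intro i _
      ring

lemma Q_spec : ∀ k a n, n ≤ 2^k → Q a k n = ∏ i ∈ range n, (3*(a + i) + 1) := by
  intro k
  induction k with
  | zero =>
    intro a n hn
    interval_cases n <;> simp [Q]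
  | succ k ih =>
    intro a n hn
    match n with
    | 0 => simp [Q]
    | n+1 =>
      have h2 : (2:ℕ)^(k+1) = 2^k * 2 := by rw [pow_succ]
      have hm : (n+1)/2 ≤ 2^k := by omega
      have hr : (n+1) - (n+1)/2 ≤ 2^k := by omega
      have hsum : (n+1)/2 + ((n+1) - (n+1)/2) = n+1 := by omega
      show Q a k ((n+1)/2) * Q (a + (n+1)/2) k (n+1 - (n+1)/2) = _
      rw [ih a _ hm, ih (a + (n+1)/2) _ hr]
      conv_rhs => rw [← hsum]
      rw [Finset.prod_range_add]
      congr 1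
      apply Finset.prod_congr rfl
      intro i _
      ring

/-- The real product `∏_{i<n} (1/3 + i)` equals `(∏_{i<n}(3i+1)) / 3^n`. -/
lemma prod_third (n : ℕ) :
    ∏ i ∈ range n, ((1:ℝ)/3 + i) = ((∏ i ∈ range n, (3*i+1) : ℕ) : ℝ) / 3^n := by
  induction n with
  | zero => simp
  | succ n ih =>
    rw [Finset.prod_range_succ, ih, Finset.prod_range_succ]
    push_cast
    field_simp
    ring

lemma cube_rpow (x : ℝ) (hx : 0 ≤ x) : (x ^ ((1:ℝ)/3)) ^ (3:ℕ) = x := by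
  rw [← Real.rpow_natCast (x ^ ((1:ℝ)/3)) 3, ← Real.rpow_mul hx]
  norm_num

/-- One step of monotonicity of the Euler `GammaSeq` at `1/3`. -/
lemma gammaSeq_step (n : ℕ) :
    Real.GammaSeq (1/3) n ≤ Real.GammaSeq (1/3) (n+1) := by
  have hprodpos : ∀ m : ℕ, 0 < ∏ j ∈ range m, ((1:ℝ)/3 + j) := by
    intro m
    apply Finset.prod_pos
    intro j _
    positivity
  unfold Real.GammaSeq
  rw [div_le_div_iff₀ (hprodpos (n+1)) (hprodpos (n+2))]
  set a : ℝ := (n:ℝ) ^ ((1:ℝ)/3) with ha_def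
  set b : ℝ := ((n+1:ℕ):ℝ) ^ ((1:ℝ)/3) with hb_def
  have ha0 : 0 ≤ a := Real.rpow_nonneg (Nat.cast_nonneg n) _
  have hb0 : 0 ≤ b := Real.rpow_nonneg (Nat.cast_nonneg (n+1)) _
  have ha3 : a ^ (3:ℕ) = (n:ℝ) := cube_rpow _ (Nat.cast_nonneg n)
  have hb3 : b ^ (3:ℕ) = ((n:ℝ) + 1) := by
    have := cube_rpow ((n+1:ℕ):ℝ) (Nat.cast_nonneg (n+1))
    rw [← hb_def] at this
    push_cast at this
    exact this
  have key : a * ((n:ℝ) + 4/3) ≤ b * ((n:ℝ) + 1) := by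
    have hL : 0 ≤ a * ((n:ℝ) + 4/3) := by positivity
    have hcube : (a * ((n:ℝ) + 4/3)) ^ (3:ℕ) ≤ (b * ((n:ℝ) + 1)) ^ (3:ℕ) := by
      rw [mul_pow, mul_pow, ha3, hb3]
      have hn0 : (0:ℝ) ≤ (n:ℝ) := Nat.cast_nonneg n
      nlinarith [sq_nonneg ((n:ℝ)), hn0]
    by_contra hlt
    push_neg at hlt
    have hL' : (0:ℝ) ≤ b * ((n:ℝ) + 1) := by positivity
    have h3 : (b * ((n:ℝ) + 1)) ^ (3:ℕ) < (a * ((n:ℝ) + 4/3)) ^ (3:ℕ) :=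
      pow_lt_pow_left₀ hlt hL' (by norm_num)
    linarith
  rw [show n + 2 = (n+1) + 1 from rfl, Finset.prod_range_succ]
  rw [Nat.factorial_succ]
  push_cast
  set P := ∏ j ∈ range (n+1), ((1:ℝ)/3 + j) with hP
  have hPpos := hprodpos (n+1)
  have hF : (0:ℝ) ≤ (Nat.factorial n : ℝ) := Nat.cast_nonneg _
  calc a * ↑(Nat.factorial n) * (P * (1/3 + (↑n + 1)))
      = (a * ((n:ℝ) + 4/3)) * (↑(Nat.factorial n) * P) := by ring
    _ ≤ (b * ((n:ℝ) + 1)) * (↑(Nat.factorial n) * P) := by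
        apply mul_le_mul_of_nonneg_right key (by positivity)
    _ = b * ((↑n + 1) * ↑(Nat.factorial n)) * P := by ring

set_option exponentiation.threshold 100000 in
set_option maxRecDepth 100000 in
set_option maxHeartbeats 2000000 in
lemma numeric_key :
    1339458243 * Q 0 15 27001 ≤ 500000000 * 30 * (F 0 15 27000) * 3^27001 := by
  decide

set_option maxHeartbeats 800000 in
/-- Lower bound for `Γ(1/3)` via the Euler sequence at `n = 27000`. -/
lemma gamma_third_lb : (1339458243 : ℝ) / 500000000 ≤ Real.Gamma (1/3) := by
  have hmono : Monotone (Real.GammaSeq (1/3)) := monotone_nat_of_le_succ gammaSeq_step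
  have hle : Real.GammaSeq (1/3) 27000 ≤ Real.Gamma (1/3) :=
    hmono.ge_of_tendsto (Real.GammaSeq_tendsto_Gamma (1/3)) 27000
  refine le_trans ?_ hle
  unfold Real.GammaSeq
  have h30 : ((27000:ℕ):ℝ) ^ ((1:ℝ)/3) = 30 := by
    have h : ((27000:ℕ):ℝ) = (30:ℝ)^(3:ℕ) := by norm_num
    rw [h, ← Real.rpow_natCast (30:ℝ) 3, ← Real.rpow_mul (by norm_num)]
    norm_num
  have hQeq : Q 0 15 27001 = ∏ i ∈ range 27001, (3*i+1) := by
    rw [Q_spec 15 0 27001 (by norm_num)]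
    apply Finset.prod_congr rfl
    intro i _
    ring
  have hprodval : ∏ i ∈ range 27001, ((1:ℝ)/3 + i)
      = ((Q 0 15 27001 : ℕ) : ℝ) / 3^27001 := by
    rw [prod_third, hQeq]
  have hFeq : (Nat.factorial 27000 : ℝ) = ((F 0 15 27000 : ℕ) : ℝ) := by
    have h : F 0 15 27000 = Nat.factorial 27000 := by
      rw [F_spec 15 0 27000 (by norm_num), ← Finset.prod_range_add_one_eq_factorial]
      apply Finset.prod_congr rfl
      intro i _
      omega
    rw [h]
  have hQpos : 0 < Q 0 15 27001 := by
    rw [hQeq]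
    apply Finset.prod_pos
    intro i _
    omega
  have hQposR : (0:ℝ) < ((Q 0 15 27001 : ℕ) : ℝ) := by exact_mod_cast hQpos
  rw [show ((27000:ℕ):ℝ) ^ ((1:ℝ)/3) * ↑(Nat.factorial 27000) /
        ∏ i ∈ range (27000 + 1), (1/3 + (i:ℝ))
      = 30 * ((F 0 15 27000 : ℕ):ℝ) / (((Q 0 15 27001 : ℕ):ℝ) / 3^27001) by
    rw [show (27000 + 1) = 27001 from rfl, hprodval, h30, hFeq]]
  rw [div_div_eq_mul_div, div_le_div_iff₀ (by norm_num) hQposR]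
  have := numeric_key
  have hcast : (1339458243:ℝ) * ((Q 0 15 27001 : ℕ):ℝ)
      ≤ 500000000 * 30 * ((F 0 15 27000 : ℕ):ℝ) * 3^27001 := by
    exact_mod_cast this
  linarith only [hcast]

/-- `3·Γ(1/3)^6 / (2^(8/3)·π^3) > 5.632`. -/
theorem stmt_4 :
    3 * Real.Gamma (1 / 3) ^ 6 / ((2 : ℝ) ^ ((8 : ℝ) / 3) * Real.pi ^ 3) > 5.632 := by
  have hq : (1339458243 : ℝ) / 500000000 ≤ Real.Gamma (1/3) := gamma_third_lb
  have h6 : ((1339458243 : ℝ) / 500000000)^6 ≤ Real.Gamma (1/3) ^ 6 :=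
    pow_le_pow_left₀ (by norm_num) hq 6
  have hrpow : ((2:ℝ) ^ ((8:ℝ)/3)) ^ (3:ℕ) = 256 := by
    rw [← Real.rpow_natCast _ 3, ← Real.rpow_mul (by norm_num)]
    norm_num
  have hrpow_pos : (0:ℝ) < (2:ℝ) ^ ((8:ℝ)/3) := Real.rpow_pos_of_pos (by norm_num) _
  have h2 : (2:ℝ) ^ ((8:ℝ)/3) < 6.34960424 := by
    by_contra h
    push_neg at h
    have := pow_le_pow_left₀ (by norm_num : (0:ℝ) ≤ 6.34960424) h 3
    rw [hrpow] at this
    norm_num at this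
  have hpi3 : Real.pi ^ 3 < 3.141593 ^ 3 :=
    pow_lt_pow_left₀ Real.pi_lt_d6 Real.pi_pos.le (by norm_num)
  have hden : (2:ℝ) ^ ((8:ℝ)/3) * Real.pi ^ 3 < 6.34960424 * 3.141593 ^ 3 :=
    mul_lt_mul'' h2 hpi3 hrpow_pos.le (by positivity)
  rw [gt_iff_lt, lt_div_iff₀ (by positivity)]
  calc (5.632:ℝ) * ((2:ℝ) ^ ((8:ℝ)/3) * Real.pi ^ 3)
      < 5.632 * (6.34960424 * 3.141593 ^ 3) := by nlinarith [hden]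
    _ ≤ 3 * ((1339458243 : ℝ) / 500000000)^6 := by norm_num
    _ ≤ 3 * Real.Gamma (1/3) ^ 6 := by linarith [h6]
end

section
/- Let F be a nonarchimedean complete field extension of Q_p with absolute value |·| normalized so |p| = p^(−1), let M be a free module of finite rank over the ring of power series in (x − x₀) converging on the closed unit disc with integral coefficients, and let ∇ = d/dx − A be a connection with A having integral coefficients (i.e. a model over O). If (d/dx − A)^p maps the integral model M into p·M, then for every m₀ in M the formal horizontal section m = ∑_{i≥0} (−1)^i ∇(d/dx)^i(m₀) (x−x₀)^i / i! converges on the open disc of radius p^(−1/(p(p−1))) around x₀. -/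
/-!
Iterating the hypothesis on `T ^ p` gives `‖T^i m₀‖ ≤ p^(-⌊i/p⌋)`. Since `‖p‖ = p⁻¹`, Ostrowski's
theorem identifies the norm of `F` on `ℚ` with the `p`-adic norm, so by Legendre's formula
`‖i!‖⁻¹ = p^(v_p(i!)) ≤ p^(i/(p-1))`. As `i/(p-1) - ⌊i/p⌋ ≤ 1 + i/(p(p-1))`, the `i`-th term is
at most `p · (r/ρ)^i` with `ρ = p^(-1/(p(p-1)))`, which tends to `0` when `r < ρ`.
-/

open Filter Real

section PowBound

variable {F : Type*} [NormedField F] {M : Type*} [NormedAddCommGroup M] [NormedSpace F M]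

lemma norm_pow_apply_le_one {T : M →ₗ[F] M} (hT : ∀ m : M, ‖m‖ ≤ 1 → ‖T m‖ ≤ 1) (i : ℕ)
    {m : M} (hm : ‖m‖ ≤ 1) : ‖(T ^ i) m‖ ≤ 1 := by
  induction i with
  | zero => simpa using hm
  | succ i ih => rw [pow_succ', Module.End.mul_apply]; exact hT _ ih

lemma norm_pow_apply_le_norm_pow {S : M →ₗ[F] M} {a : F}
    (hS : ∀ m : M, ‖m‖ ≤ 1 → ∃ m' : M, ‖m'‖ ≤ 1 ∧ S m = a • m') (q : ℕ) :
    ∀ m : M, ‖m‖ ≤ 1 → ‖(S ^ q) m‖ ≤ ‖a‖ ^ q := by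
  induction q with
  | zero => simp
  | succ q ih =>
    intro m hm
    obtain ⟨m', hm', hSm⟩ := hS m hm
    rw [pow_succ, Module.End.mul_apply, hSm, map_smul, norm_smul, pow_succ']
    gcongr
    exact ih m' hm'

lemma norm_pow_apply_le_norm_pow_div {T : M →ₗ[F] M} {k : ℕ} {a : F}
    (hT : ∀ m : M, ‖m‖ ≤ 1 → ‖T m‖ ≤ 1)
    (hTk : ∀ m : M, ‖m‖ ≤ 1 → ∃ m' : M, ‖m'‖ ≤ 1 ∧ (T ^ k) m = a • m') (i : ℕ)
    {m : M} (hm : ‖m‖ ≤ 1) : ‖(T ^ i) m‖ ≤ ‖a‖ ^ (i / k) := by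
  have hsplit : T ^ i = (T ^ k) ^ (i / k) * T ^ (i % k) := by
    rw [← pow_mul, ← pow_add, Nat.div_add_mod]
  rw [hsplit, Module.End.mul_apply]
  exact norm_pow_apply_le_norm_pow hTk _ _ (norm_pow_apply_le_one hT _ hm)

end PowBound

lemma charZero_of_norm_natCast_lt_one {F : Type*} [NormedField F] {n : ℕ}
    (h₀ : 0 < ‖(n : F)‖) (h₁ : ‖(n : F)‖ < 1) : CharZero F := by
  obtain ⟨ℓ, hℓ⟩ := CharP.exists F
  rcases CharP.char_is_prime_or_zero F ℓ with hℓ | rfl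
  · have : Fact ℓ.Prime := ⟨hℓ⟩
    have hfrob : (n : F) ^ ℓ = n := by
      have := congrArg (ZMod.castHom (dvd_refl ℓ) F) (ZMod.pow_card (n : ZMod ℓ))
      rwa [map_pow, map_natCast] at this
    have := pow_lt_self_of_lt_one₀ h₀ h₁ hℓ.one_lt
    rw [← norm_pow, hfrob] at this
    exact absurd this (lt_irrefl _)
  · exact CharP.charP_to_charZero F

noncomputable def ratAbv (F : Type*) [NormedField F] [CharZero F] : AbsoluteValue ℚ ℝ :=
  (IsAbsoluteValue.toAbsoluteValue (norm : F → ℝ)).comp (Rat.castHom F).injective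

@[simp] lemma ratAbv_apply {F : Type*} [NormedField F] [CharZero F] (q : ℚ) :
    ratAbv F q = ‖(q : F)‖ := rfl

section PadicNorm

open Rat.AbsoluteValue

variable {F : Type*} [NormedField F] [CharZero F] {p : ℕ} [hp : Fact p.Prime]

lemma ratAbv_isEquiv_padic (hpF : ‖(p : F)‖ = (p : ℝ)⁻¹) : (ratAbv F).IsEquiv (padic p) := by
  have hpF₁ : ratAbv F p < 1 := by
    simpa [hpF] using inv_lt_one_of_one_lt₀ (by exact_mod_cast hp.out.one_lt)
  have bdd : ∀ n : ℕ, ratAbv F n ≤ 1 := by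
    by_contra h
    exact (one_lt_of_not_bounded h hp.out.one_lt).not_gt hpF₁
  have nontriv : (ratAbv F).IsNontrivial :=
    ⟨p, by exact_mod_cast hp.out.ne_zero, hpF₁.ne⟩
  obtain ⟨q, ⟨hq, hequiv⟩, -⟩ := equiv_padic_of_bounded nontriv bdd
  have hqp : q ∣ p := by
    have := hequiv.lt_one_iff.1 hpF₁
    rw [padic_eq_padicNorm] at this
    exact_mod_cast (padicNorm.nat_lt_one_iff p).1 (by exact_mod_cast this)
  obtain rfl := (Nat.prime_dvd_prime_iff_eq hq.out hp.out).1 hqp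
  exact hequiv

lemma norm_natCast_eq_one_of_not_dvd (hpF : ‖(p : F)‖ = (p : ℝ)⁻¹) {n : ℕ} (hn : ¬ p ∣ n) :
    ‖(n : F)‖ = 1 := by
  have hpadic : padic p n = 1 := by
    rw [padic_eq_padicNorm]
    exact_mod_cast (padicNorm.nat_eq_one_iff n).2 hn
  simpa using (ratAbv_isEquiv_padic hpF).eq_one_iff.2 hpadic

lemma norm_natCast_eq_inv_pow_padicValNat (hpF : ‖(p : F)‖ = (p : ℝ)⁻¹) {n : ℕ} (hn : n ≠ 0) :
    ‖(n : F)‖ = (p : ℝ)⁻¹ ^ padicValNat p n := by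
  obtain ⟨k, m, hm, rfl⟩ := Nat.exists_eq_pow_mul_and_not_dvd hn p hp.out.ne_one
  rw [padicValNat.mul (pow_ne_zero _ hp.out.ne_zero) (by rintro rfl; simp at hm),
    padicValNat.prime_pow, padicValNat.eq_zero_of_not_dvd hm, Nat.cast_mul, Nat.cast_pow,
    norm_mul, norm_pow, hpF, norm_natCast_eq_one_of_not_dvd hpF hm, mul_one, add_zero]

end PadicNorm

lemma padicValNat_factorial_sub_div_le {p : ℕ} (hp : p.Prime) (i : ℕ) :
    (padicValNat p i.factorial : ℝ) - (i / p : ℕ) ≤ 1 + i / (p * (p - 1)) := by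
  have : Fact p.Prime := ⟨hp⟩
  have hp2 : (2 : ℝ) ≤ p := by exact_mod_cast hp.two_le
  have hv : ((p - 1 : ℕ) : ℝ) * padicValNat p i.factorial ≤ i := by
    exact_mod_cast (sub_one_mul_padicValNat_factorial (p := p) i).trans_le (Nat.sub_le _ _)
  push_cast [hp.one_le] at hv
  have hdiv : (i : ℝ) < p * ((i / p : ℕ) + 1) := by
    exact_mod_cast Nat.lt_mul_div_succ i hp.pos
  have hexp : (i : ℝ) / (p - 1) - (i / p - 1) = 1 + i / (p * (p - 1)) := by
    have : (p : ℝ) - 1 ≠ 0 := by linarith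
    field_simp
    ring
  have hlegendre : (padicValNat p i.factorial : ℝ) ≤ i / (p - 1) := by
    rw [le_div_iff₀ (by linarith)]; linarith
  have hfloor : (i : ℝ) / p - 1 < (i / p : ℕ) := by
    rw [div_sub_one (by positivity), div_lt_iff₀ (by positivity)]; linarith
  linarith

lemma inv_pow_div_mul_pow_padicValNat_factorial_le {p : ℕ} (hp : p.Prime) (i : ℕ) :
    (p : ℝ)⁻¹ ^ (i / p) * (p : ℝ) ^ padicValNat p i.factorial ≤
      p * ((p : ℝ) ^ (-(1 : ℝ) / (p * (p - 1))))⁻¹ ^ i := by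
  have hp0 : (0 : ℝ) < p := by exact_mod_cast hp.pos
  calc (p : ℝ)⁻¹ ^ (i / p) * (p : ℝ) ^ padicValNat p i.factorial
      = (p : ℝ) ^ ((padicValNat p i.factorial : ℝ) - (i / p : ℕ)) := by
        rw [rpow_sub hp0, rpow_natCast, rpow_natCast, inv_pow, div_eq_mul_inv, mul_comm]
    _ ≤ (p : ℝ) ^ (1 + i / (p * (p - 1)) : ℝ) :=
        rpow_le_rpow_of_exponent_le (by exact_mod_cast hp.one_le)
          (padicValNat_factorial_sub_div_le hp i)
    _ = p * ((p : ℝ) ^ (-(1 : ℝ) / (p * (p - 1))))⁻¹ ^ i := by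
        rw [rpow_add hp0, rpow_one, ← rpow_neg hp0.le, ← rpow_natCast, ← rpow_mul hp0.le]
        ring_nf

/-- Let `F` be a complete nonarchimedean field with `‖p‖ = p⁻¹`, `M` a normed module over `F`
with an integral structure given by its unit ball, and `T = ∇(d/dx)` an `F`-linear operator
preserving the unit ball (the integral model) and such that `T^p` maps the unit ball into
`p` times the unit ball (vanishing `p`-curvature).  Then for every `m₀` in the unit ball, the
formal horizontal section `∑ (−1)^i T^i(m₀) (x−x₀)^i / i!` converges on the open disc of radius
`p^(−1/(p(p−1)))`: its coefficients `c_i` satisfy `‖c_i‖ r^i → 0` for all `r` below that radius. -/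
theorem stmt_8 (p : ℕ) (hp : p.Prime) {F : Type*} [NontriviallyNormedField F]
    (hpF : ‖(p : F)‖ = (p : ℝ)⁻¹)
    {M : Type*} [NormedAddCommGroup M] [NormedSpace F M]
    (T : M →ₗ[F] M)
    (hT1 : ∀ m : M, ‖m‖ ≤ 1 → ‖T m‖ ≤ 1)
    (hTp : ∀ m : M, ‖m‖ ≤ 1 → ∃ m' : M, ‖m'‖ ≤ 1 ∧ (T ^ p) m = (p : F) • m')
    (m₀ : M) (hm₀ : ‖m₀‖ ≤ 1) :
    ∀ r : ℝ, 0 < r → r < (p : ℝ) ^ (-(1 : ℝ) / (p * (p - 1))) →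
      Tendsto (fun i : ℕ => ‖(T ^ i) m₀‖ * ‖((i.factorial : F))‖⁻¹ * r ^ i)
        atTop (nhds 0) := by
  intro r hr hrρ
  have : Fact p.Prime := ⟨hp⟩
  have : CharZero F := charZero_of_norm_natCast_lt_one (n := p) (by simp [hpF, hp.pos])
    (by simpa [hpF] using inv_lt_one_of_one_lt₀ (by exact_mod_cast hp.one_lt))
  set ρ := (p : ℝ) ^ (-(1 : ℝ) / (p * (p - 1)))
  have hρ : 0 < ρ := rpow_pos_of_pos (by exact_mod_cast hp.pos) _
  have hbound (i : ℕ) : ‖(T ^ i) m₀‖ * ‖((i.factorial : F))‖⁻¹ * r ^ i ≤ p * (r / ρ) ^ i :=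
    calc ‖(T ^ i) m₀‖ * ‖((i.factorial : F))‖⁻¹ * r ^ i
        ≤ (p : ℝ)⁻¹ ^ (i / p) * (p : ℝ) ^ padicValNat p i.factorial * r ^ i := by
          rw [norm_natCast_eq_inv_pow_padicValNat hpF i.factorial_ne_zero, inv_pow, inv_inv,
            ← hpF]
          gcongr
          exact norm_pow_apply_le_norm_pow_div hT1 hTp i hm₀
      _ ≤ p * ρ⁻¹ ^ i * r ^ i := by
          gcongr ?_ * _
          exact inv_pow_div_mul_pow_padicValNat_factorial_le hp i
      _ = p * (r / ρ) ^ i := by rw [div_eq_inv_mul, mul_pow, mul_assoc]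
  refine squeeze_zero (fun i => by positivity) hbound ?_
  simpa using (tendsto_pow_atTop_nhds_zero_of_lt_one (by positivity)
    ((div_lt_one hρ).2 hrρ)).const_mul (p : ℝ)
end

section
/- Define θ₀₀(t) = ∑_{n∈ℤ} exp(πi n² t), θ₀₁(t) = ∑_{n∈ℤ} exp(πi(n² t + n)), θ₁₀(t) = ∑_{n∈ℤ} exp(πi(n+1/2)² t) for t in the upper half-plane. Then θ₀₀(t)^4 = θ₀₁(t)^4 + θ₁₀(t)^4 for all t in the upper half-plane (Jacobi's identity). -/
open Complex

/-- The theta constant `θ₀₀(t) = ∑_{n∈ℤ} exp(πi n² t)`. -/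
noncomputable def theta00 (t : ℂ) : ℂ :=
  ∑' n : ℤ, Complex.exp (Real.pi * Complex.I * (n : ℂ) ^ 2 * t)

/-- The theta constant `θ₀₁(t) = ∑_{n∈ℤ} exp(πi(n² t + n))`. -/
noncomputable def theta01 (t : ℂ) : ℂ :=
  ∑' n : ℤ, Complex.exp (Real.pi * Complex.I * ((n : ℂ) ^ 2 * t + (n : ℂ)))

/-- The theta constant `θ₁₀(t) = ∑_{n∈ℤ} exp(πi(n+1/2)² t)`. -/
noncomputable def theta10 (t : ℂ) : ℂ :=
  ∑' n : ℤ, Complex.exp (Real.pi * Complex.I * ((n : ℂ) + 1 / 2) ^ 2 * t)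

namespace Stmt15Aux

/-! ### Summability and `HasSum` statements for the three theta series -/

lemma summable_aux {t : ℂ} (ht : 0 < t.im) (z : ℂ) :
    Summable fun n : ℤ => Complex.exp
      (2 * (Real.pi : ℂ) * Complex.I * (n : ℂ) * z + Real.pi * Complex.I * (n : ℂ) ^ 2 * t) :=
  (summable_jacobiTheta₂_term_iff z t).2 ht

lemma hasSum00 {t : ℂ} (ht : 0 < t.im) :
    HasSum (fun n : ℤ => Complex.exp (Real.pi * Complex.I * (n : ℂ) ^ 2 * t)) (theta00 t) := by
  have : Summable fun n : ℤ => Complex.exp (Real.pi * Complex.I * (n : ℂ) ^ 2 * t) := by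
    refine (summable_aux ht 0).congr fun n => ?_
    simp
  exact this.hasSum

lemma hasSum01 {t : ℂ} (ht : 0 < t.im) :
    HasSum (fun n : ℤ => Complex.exp (Real.pi * Complex.I * ((n : ℂ) ^ 2 * t + (n : ℂ))))
      (theta01 t) := by
  have : Summable fun n : ℤ =>
      Complex.exp (Real.pi * Complex.I * ((n : ℂ) ^ 2 * t + (n : ℂ))) := by
    refine (summable_aux ht (1 / 2)).congr fun n => ?_
    congr 1
    ring
  exact this.hasSum

lemma hasSum10 {t : ℂ} (ht : 0 < t.im) :
    HasSum (fun n : ℤ => Complex.exp (Real.pi * Complex.I * ((n : ℂ) + 1 / 2) ^ 2 * t))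
      (theta10 t) := by
  have : Summable fun n : ℤ =>
      Complex.exp (Real.pi * Complex.I * ((n : ℂ) + 1 / 2) ^ 2 * t) := by
    have := ((summable_aux ht (t / 2)).mul_left
      (Complex.exp (Real.pi * Complex.I * t / 4)))
    refine this.congr fun n => ?_
    rw [← Complex.exp_add]
    congr 1
    ring
  exact this.hasSum

/-- Product of two `HasSum`s over `ℤ` as a `HasSum` over `ℤ × ℤ`. -/
lemma hasSum_mul {f g : ℤ → ℂ} {a b : ℂ} (hf : HasSum f a) (hg : HasSum g b) :
    HasSum (fun p : ℤ × ℤ => f p.1 * g p.2) (a * b) :=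
  hf.mul hg (summable_mul_of_summable_norm
    (summable_norm_iff.2 hf.summable) (summable_norm_iff.2 hg.summable))

/-- Splitting a sum over `ℤ × ℤ` along two injections with disjoint ranges covering
everything. -/
lemma hasSum_split {F G H : ℤ × ℤ → ℂ} {X Y : ℂ}
    (i j : ℤ × ℤ → ℤ × ℤ) (hi : Function.Injective i) (hj : Function.Injective j)
    (hdisj : ∀ p q, i p ≠ j q)
    (hcov : ∀ p, (∃ q, i q = p) ∨ (∃ q, j q = p))
    (hFi : ∀ p, F (i p) = G p) (hFj : ∀ p, F (j p) = H p)
    (hG : HasSum G X) (hH : HasSum H Y) : HasSum F (X + Y) := by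
  have h1 : HasSum (fun x : Set.range i => F x) X := by
    rw [hi.hasSum_range_iff]
    exact (funext hFi : F ∘ i = G) ▸ hG
  have h2 : HasSum (fun x : Set.range j => F x) Y := by
    rw [hj.hasSum_range_iff]
    exact (funext hFj : F ∘ j = H) ▸ hH
  have hc : IsCompl (Set.range i) (Set.range j) := by
    constructor
    · rw [Set.disjoint_left]
      rintro _ ⟨p, rfl⟩ ⟨q, hq⟩
      exact hdisj p q hq.symm
    · rw [codisjoint_iff_le_sup]
      intro p _
      rcases hcov p with ⟨q, rfl⟩ | ⟨q, rfl⟩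
      · exact Or.inl ⟨q, rfl⟩
      · exact Or.inr ⟨q, rfl⟩
  exact h1.add_isCompl hc h2

lemma im_two_mul {t : ℂ} (ht : 0 < t.im) : 0 < (2 * t).im := by
  rw [show (2 * t).im = 2 * t.im by simp [Complex.mul_im]]
  linarith

/-! ### The three quadratic identities -/

/-- `θ₀₀(t)² = θ₀₀(2t)² + θ₁₀(2t)²`. -/
lemma idA {t : ℂ} (ht : 0 < t.im) :
    theta00 t ^ 2 = theta00 (2 * t) ^ 2 + theta10 (2 * t) ^ 2 := by
  have h2t := im_two_mul ht
  have hF := hasSum_mul (hasSum00 ht) (hasSum00 ht)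
  have hG := hasSum_mul (hasSum00 h2t) (hasSum00 h2t)
  have hH := hasSum_mul (hasSum10 h2t) (hasSum10 h2t)
  have key := hasSum_split (F := fun p : ℤ × ℤ =>
      Complex.exp (Real.pi * Complex.I * (p.1 : ℂ) ^ 2 * t) *
        Complex.exp (Real.pi * Complex.I * (p.2 : ℂ) ^ 2 * t))
    (fun q => (q.1 + q.2, q.1 - q.2)) (fun q => (q.1 + q.2 + 1, q.1 - q.2))
    (fun p q h => by simp only [Prod.ext_iff] at h ⊢; omega)
    (fun p q h => by simp only [Prod.ext_iff] at h ⊢; omega)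
    (fun p q h => by simp only [Prod.ext_iff] at h; omega)
    (fun p => by
      rcases Int.even_or_odd (p.1 + p.2) with ⟨k, hk⟩ | ⟨k, hk⟩
      · exact Or.inl ⟨(k, p.1 - k), by simp only [Prod.ext_iff]; omega⟩
      · exact Or.inr ⟨(k, p.1 - k - 1), by simp only [Prod.ext_iff]; omega⟩)
    (fun p => by
      dsimp only
      rw [← Complex.exp_add, ← Complex.exp_add]
      congr 1
      push_cast
      ring)
    (fun p => by
      dsimp only
      rw [← Complex.exp_add, ← Complex.exp_add]
      congr 1
      push_cast
      ring)
    hG hH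
  rw [sq, sq, sq]
  exact hF.unique key

/-- `θ₀₁(t)² = θ₀₀(2t)² - θ₁₀(2t)²`. -/
lemma idB {t : ℂ} (ht : 0 < t.im) :
    theta01 t ^ 2 = theta00 (2 * t) ^ 2 - theta10 (2 * t) ^ 2 := by
  have h2t := im_two_mul ht
  have hF := hasSum_mul (hasSum01 ht) (hasSum01 ht)
  have hG := hasSum_mul (hasSum00 h2t) (hasSum00 h2t)
  have hH := (hasSum_mul (hasSum10 h2t) (hasSum10 h2t)).neg
  have key := hasSum_split (F := fun p : ℤ × ℤ =>
      Complex.exp (Real.pi * Complex.I * ((p.1 : ℂ) ^ 2 * t + (p.1 : ℂ))) *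
        Complex.exp (Real.pi * Complex.I * ((p.2 : ℂ) ^ 2 * t + (p.2 : ℂ))))
    (fun q => (q.1 + q.2, q.1 - q.2)) (fun q => (q.1 + q.2 + 1, q.1 - q.2))
    (fun p q h => by simp only [Prod.ext_iff] at h ⊢; omega)
    (fun p q h => by simp only [Prod.ext_iff] at h ⊢; omega)
    (fun p q h => by simp only [Prod.ext_iff] at h; omega)
    (fun p => by
      rcases Int.even_or_odd (p.1 + p.2) with ⟨k, hk⟩ | ⟨k, hk⟩
      · exact Or.inl ⟨(k, p.1 - k), by simp only [Prod.ext_iff]; omega⟩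
      · exact Or.inr ⟨(k, p.1 - k - 1), by simp only [Prod.ext_iff]; omega⟩)
    (fun p => by
      dsimp only
      rw [← Complex.exp_add, ← Complex.exp_add]
      push_cast
      rw [show Real.pi * Complex.I * (((p.1 : ℂ) + p.2) ^ 2 * t + ((p.1 : ℂ) + p.2)) +
            Real.pi * Complex.I * (((p.1 : ℂ) - p.2) ^ 2 * t + ((p.1 : ℂ) - p.2)) =
          (Real.pi * Complex.I * (p.1 : ℂ) ^ 2 * (2 * t) +
            Real.pi * Complex.I * (p.2 : ℂ) ^ 2 * (2 * t)) +
            (p.1 : ℂ) * (2 * Real.pi * Complex.I) by ring]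
      rw [Complex.exp_add, Complex.exp_int_mul_two_pi_mul_I, mul_one])
    (fun p => by
      dsimp only
      rw [← Complex.exp_add, ← Complex.exp_add]
      push_cast
      rw [show Real.pi * Complex.I * (((p.1 : ℂ) + p.2 + 1) ^ 2 * t + ((p.1 : ℂ) + p.2 + 1)) +
            Real.pi * Complex.I * (((p.1 : ℂ) - p.2) ^ 2 * t + ((p.1 : ℂ) - p.2)) =
          (Real.pi * Complex.I * ((p.1 : ℂ) + 1 / 2) ^ 2 * (2 * t) +
            Real.pi * Complex.I * ((p.2 : ℂ) + 1 / 2) ^ 2 * (2 * t)) +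
            ((p.1 : ℂ) * (2 * Real.pi * Complex.I) + Real.pi * Complex.I) by ring]
      rw [Complex.exp_add, Complex.exp_add, Complex.exp_add, Complex.exp_int_mul_two_pi_mul_I,
        Complex.exp_pi_mul_I]
      ring)
    hG hH
  rw [sq, sq, sq, sub_eq_add_neg]
  exact hF.unique key

/-- `θ₁₀(t)² = 2 θ₀₀(2t) θ₁₀(2t)`. -/
lemma idC {t : ℂ} (ht : 0 < t.im) :
    theta10 t ^ 2 = 2 * (theta00 (2 * t) * theta10 (2 * t)) := by
  have h2t := im_two_mul ht
  have hF := hasSum_mul (hasSum10 ht) (hasSum10 ht)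
  have hG := hasSum_mul (hasSum00 h2t) (hasSum10 h2t)
  have hH := hasSum_mul (hasSum10 h2t) (hasSum00 h2t)
  have key := hasSum_split (F := fun p : ℤ × ℤ =>
      Complex.exp (Real.pi * Complex.I * ((p.1 : ℂ) + 1 / 2) ^ 2 * t) *
        Complex.exp (Real.pi * Complex.I * ((p.2 : ℂ) + 1 / 2) ^ 2 * t))
    (fun q => (q.1 + q.2, q.1 - q.2 - 1)) (fun q => (q.1 + q.2, q.1 - q.2))
    (fun p q h => by simp only [Prod.ext_iff] at h ⊢; omega)
    (fun p q h => by simp only [Prod.ext_iff] at h ⊢; omega)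
    (fun p q h => by simp only [Prod.ext_iff] at h; omega)
    (fun p => by
      rcases Int.even_or_odd (p.1 + p.2) with ⟨k, hk⟩ | ⟨k, hk⟩
      · exact Or.inr ⟨(k, p.1 - k), by simp only [Prod.ext_iff]; omega⟩
      · exact Or.inl ⟨(k + 1, p.1 - k - 1), by simp only [Prod.ext_iff]; omega⟩)
    (fun p => by
      dsimp only
      rw [← Complex.exp_add, ← Complex.exp_add]
      congr 1
      push_cast
      ring)
    (fun p => by
      dsimp only
      rw [← Complex.exp_add, ← Complex.exp_add]
      congr 1
      push_cast
      ring)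
    hG hH
  rw [sq]
  rw [hF.unique key]
  ring

end Stmt15Aux

/-- Jacobi's quartic identity: `θ₀₀(t)⁴ = θ₀₁(t)⁴ + θ₁₀(t)⁴` on the upper half-plane. -/
theorem stmt_15 (t : ℂ) (ht : 0 < t.im) :
    theta00 t ^ 4 = theta01 t ^ 4 + theta10 t ^ 4 := by
  have e : ∀ z : ℂ, z ^ 4 = (z ^ 2) ^ 2 := fun z => by ring
  rw [e, e, e, Stmt15Aux.idA ht, Stmt15Aux.idB ht, Stmt15Aux.idC ht]
  ring
end

section
/- With θ₀₁, θ₀₀, θ₁₀ the Jacobi theta constants and t₀ = (1+i)/2, one has θ₀₀(t₀)^4 = −θ₀₁(t₀)^4, equivalently λ(t₀) = θ₀₀(t₀)^4/θ₀₁(t₀)^4 = −1. -/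
open Complex


private lemma aux_shift (z τ : ℂ) : jacobiTheta₂ z (τ + 1) = jacobiTheta₂ (z + 1/2) τ := by
  unfold jacobiTheta₂ jacobiTheta₂_term
  refine tsum_congr fun n => ?_
  rw [Complex.exp_eq_exp_iff_exists_int]
  obtain ⟨k, hk⟩ : ∃ k : ℤ, n * (n - 1) = 2 * k :=
    (Int.even_mul_pred_self n).exists_two_nsmul _ |>.imp fun k h => by
      simpa [two_nsmul, two_mul] using h
  refine ⟨k, ?_⟩
  have : (n:ℂ)^2 = (n:ℂ) + 2*(k:ℂ) := by
    have := congrArg (Int.cast : ℤ → ℂ) hk; push_cast at this; linear_combination this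
  linear_combination (Real.pi : ℂ) * I * this

private lemma aux_re_exp (a b : ℝ) : (Complex.exp (↑a + ↑b*I)).re = Real.exp a * Real.cos b := by
  rw [Complex.exp_re]; simp

private lemma aux_sqrt_sq {w : ℂ} (hw : w ≠ 0) : (w ^ (1/2 : ℂ))^2 = w := by
  rw [sq, ← Complex.cpow_add _ _ hw]; norm_num

private lemma aux_theta00 (t : ℂ) : theta00 t = jacobiTheta₂ 0 t := by
  unfold theta00 jacobiTheta₂ jacobiTheta₂_term
  exact tsum_congr fun n => by ring_nf

private lemma aux_theta01 (t : ℂ) : theta01 t = jacobiTheta₂ (1/2) t := by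
  unfold theta01 jacobiTheta₂ jacobiTheta₂_term
  exact tsum_congr fun n => by
    rw [Complex.exp_eq_exp_iff_exists_int]; exact ⟨0, by push_cast; ring⟩

private lemma aux_ne1 : (-I*((1+I)/2) : ℂ) ≠ 0 := by
  simp [Complex.ext_iff]

private lemma aux_ne2 : (-I*(1+I) : ℂ) ≠ 0 := by
  simp [Complex.ext_iff]

private lemma aux_main :
    jacobiTheta₂ 0 ((1+I)/2) =
      (1/(-I*((1+I)/2) : ℂ)^(1/2:ℂ) * (1/(-I*(1+I) : ℂ)^(1/2:ℂ))) *
        jacobiTheta₂ (1/2) ((1+I)/2) := by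
  have h1 := jacobiTheta₂_functional_equation 0 ((1+I)/2)
  have h3 := jacobiTheta₂_functional_equation 0 (1+I)
  simp only [zero_pow, mul_zero, zero_div, Complex.exp_zero, mul_one, ne_eq,
    OfNat.ofNat_ne_zero, not_false_iff] at h1 h3
  rw [show (-1 : ℂ)/((1+I)/2) = -1+I by
    rw [div_eq_iff (by simp [Complex.ext_iff] : ((1:ℂ)+I)/2 ≠ 0)]
    linear_combination (-1/2 : ℂ) * Complex.I_sq] at h1
  rw [show (-1 : ℂ)/(1+I) = (-1+I)/2 by
    rw [div_eq_div_iff (by simp [Complex.ext_iff] : (1:ℂ)+I ≠ 0) (two_ne_zero)]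
    linear_combination -Complex.I_sq] at h3
  have h2 : jacobiTheta₂ 0 (-1+I) = jacobiTheta₂ 0 (1+I) := by
    have := jacobiTheta₂_add_right 0 (-1+I)
    rw [show (-1+I+2 : ℂ) = 1+I by ring] at this
    exact this.symm
  have h4 : jacobiTheta₂ 0 ((-1+I)/2) = jacobiTheta₂ 0 ((3+I)/2) := by
    have := jacobiTheta₂_add_right 0 ((-1+I)/2)
    rw [show ((-1+I)/2+2 : ℂ) = (3+I)/2 by ring] at this
    exact this.symm
  have h5 : jacobiTheta₂ 0 ((3+I)/2) = jacobiTheta₂ (1/2) ((1+I)/2) := by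
    have := aux_shift 0 ((1+I)/2)
    rw [show ((1+I)/2+1 : ℂ) = (3+I)/2 by ring, zero_add] at this
    exact this
  rw [h1, h2, h3, h4, h5]; ring

private lemma aux_A_ne : jacobiTheta₂ 0 ((1+I)/2) ≠ 0 := by
  have him : 0 < ((1+I)/2 : ℂ).im := by simp
  have hs := hasSum_jacobiTheta₂_term 0 him
  have hre := hs.mapL Complex.reCLM
  have hnonneg : ∀ n : ℤ, 0 ≤ (jacobiTheta₂_term n 0 ((1+I)/2)).re := by
    intro n
    unfold jacobiTheta₂_term
    have hexp : 2*(Real.pi:ℂ)*I*(n:ℂ)*0 + (Real.pi:ℂ)*I*(n:ℂ)^2*((1+I)/2)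
        = ((-(Real.pi*(n:ℝ)^2/2) : ℝ) : ℂ) + ((Real.pi*(n:ℝ)^2/2 : ℝ) : ℂ)*I := by
      push_cast
      linear_combination ((Real.pi:ℂ)*(n:ℂ)^2/2) * Complex.I_sq
    rw [hexp, aux_re_exp]
    have hcos : 0 ≤ Real.cos (Real.pi*(n:ℝ)^2/2) := by
      rcases Int.even_or_odd n with ⟨m, hm⟩ | ⟨m, hm⟩
      · have : Real.pi*(n:ℝ)^2/2 = (m^2 : ℤ)*(2*Real.pi) := by
          push_cast [hm]; ring
        rw [this, Real.cos_int_mul_two_pi]; norm_num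
      · have : Real.pi*(n:ℝ)^2/2 = Real.pi/2 + (m^2+m : ℤ)*(2*Real.pi) := by
          push_cast [hm]; ring
        rw [this, Real.cos_add_int_mul_two_pi, Real.cos_pi_div_two]
    positivity
  have hle : (1:ℝ) ≤ (jacobiTheta₂ 0 ((1+I)/2)).re := by
    have := le_hasSum hre 0 (fun n _ => by simpa using hnonneg n)
    simpa [jacobiTheta₂_term] using this
  intro h
  rw [h] at hle
  norm_num at hle

/-- At `t₀ = (1+i)/2` one has `θ₀₀(t₀)⁴ = −θ₀₁(t₀)⁴`, equivalently the modular lambda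
function `λ = θ₀₀⁴/θ₀₁⁴` takes the value `−1` there. -/
theorem stmt_16 :
    theta00 ((1 + Complex.I) / 2) ^ 4 = -theta01 ((1 + Complex.I) / 2) ^ 4 ∧
    theta00 ((1 + Complex.I) / 2) ^ 4 / theta01 ((1 + Complex.I) / 2) ^ 4 = -1 := by
  rw [aux_theta00, aux_theta01]
  have hAB := aux_main
  have hw : (-I*((1+I)/2) : ℂ) * (-I*(1+I)) = -I := by
    linear_combination (I*(I+2)/2) * Complex.I_sq
  have hC2 : ((1/(-I*((1+I)/2) : ℂ)^(1/2:ℂ) * (1/(-I*(1+I) : ℂ)^(1/2:ℂ))))^2 = I := by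
    rw [mul_pow, div_pow, div_pow, aux_sqrt_sq aux_ne1, aux_sqrt_sq aux_ne2, one_pow,
      div_mul_div_comm, one_mul, hw, one_div, inv_neg, Complex.inv_I, neg_neg]
  have key : (jacobiTheta₂ 0 ((1+I)/2))^2 = I * (jacobiTheta₂ (1/2) ((1+I)/2))^2 := by
    rw [hAB, mul_pow, hC2]
  have h4 : (jacobiTheta₂ 0 ((1+I)/2))^4 = -(jacobiTheta₂ (1/2) ((1+I)/2))^4 := by
    have h : (jacobiTheta₂ 0 ((1+I)/2))^4 = ((jacobiTheta₂ 0 ((1+I)/2))^2)^2 := by ring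
    rw [h, key, mul_pow, Complex.I_sq]; ring
  have hBne : jacobiTheta₂ (1/2) ((1+I)/2) ≠ 0 := by
    intro hb
    exact aux_A_ne (by rw [hAB, hb, mul_zero])
  refine ⟨h4, ?_⟩
  rw [h4, neg_div, div_self (pow_ne_zero 4 hBne)]
end
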